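/- Let D be a finitely generated abelian group, S a D-graded ring, R_0 an S_0-algebra, and R = S ⊗_{S_0} R_0 with the induced D-grading. Let S_+ ⊆ S (resp. R_+ ⊆ R) be the ideal generated by relevant elements. Then rad(R_+) = rad((S_+)R), where (S_+)R is the extension of S_+ along the natural map S → R. -/
import Mathlib


open scoped TensorProduct Pointwise

section helpers

lemma my_mul_mem_closure_mul {R : Type*} [CommRing R] {A B : Set R} {x y : R}
    (hx : x ∈ AddSubgroup.closure A) (hy : y ∈ AddSubgroup.closure B) :
    x * y ∈ AddSubgroup.closure (A * B) := by
  have hx' : x ∈ Submodule.span ℤ A := by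
    rw [← Submodule.mem_toAddSubgroup, Submodule.span_int_eq_addSubgroupClosure]; exact hx
  have hy' : y ∈ Submodule.span ℤ B := by
    rw [← Submodule.mem_toAddSubgroup, Submodule.span_int_eq_addSubgroupClosure]; exact hy
  have h : x * y ∈ Submodule.span ℤ A * Submodule.span ℤ B := Submodule.mul_mem_mul hx' hy'
  rw [Submodule.span_mul_span] at h
  rw [← Submodule.span_int_eq_addSubgroupClosure]
  exact h

end helpers

/-- A homogeneous element `f` of a ring with pieces indexed by `D` is *relevant* if some
power `f^k` (`k ≥ 1`) admits a factorization into homogeneous elements whose degrees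
generate a finite-index subgroup of `D`. -/
def Relevant {D A : Type*} [AddCommGroup D] [CommRing A]
    (𝒜 : D → AddSubgroup A) (f : A) : Prop :=
  (∃ d, f ∈ 𝒜 d) ∧
    ∃ n : ℕ, 1 ≤ n ∧ ∃ (ℓ : ℕ) (g : Fin ℓ → A) (e : Fin ℓ → D),
      (∀ i, g i ∈ 𝒜 (e i)) ∧ f ^ n = ∏ i, g i ∧
      (AddSubgroup.closure (Set.range e)).FiniteIndex

/-- The induced grading on the base change `R = S ⊗_{S_0} R_0`:
`R_d` is (additively) generated by the simple tensors `s ⊗ a` with `s ∈ S_d`. -/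
noncomputable def baseChangeGrading {D S : Type*} [AddCommGroup D] [DecidableEq D] [CommRing S]
    (𝒜 : D → AddSubgroup S) [GradedRing 𝒜]
    (R₀ : Type*) [CommRing R₀] [Algebra (SetLike.GradeZero.subring 𝒜) R₀] (d : D) :
    AddSubgroup (S ⊗[SetLike.GradeZero.subring 𝒜] R₀) :=
  AddSubgroup.closure {x | ∃ s ∈ 𝒜 d, ∃ a : R₀, x = s ⊗ₜ a}

lemma bcg_prod_mem {D S : Type*} [AddCommGroup D] [DecidableEq D]
    [CommRing S] (𝒜 : D → AddSubgroup S) [GradedRing 𝒜]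
    (R₀ : Type*) [CommRing R₀] [Algebra (SetLike.GradeZero.subring 𝒜) R₀] :
    ∀ (ℓ : ℕ) (e : Fin ℓ → D) (g : Fin ℓ → S ⊗[SetLike.GradeZero.subring 𝒜] R₀),
      (∀ i, g i ∈ baseChangeGrading 𝒜 R₀ (e i)) →
      ∏ i, g i ∈ AddSubgroup.closure
        {x | ∃ σ : Fin ℓ → S, (∀ i, σ i ∈ 𝒜 (e i)) ∧ ∃ a : R₀, x = (∏ i, σ i) ⊗ₜ a}
  | 0, e, g, hg => by
      refine AddSubgroup.subset_closure ⟨Fin.elim0, fun i => i.elim0, 1, ?_⟩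
      simp [Algebra.TensorProduct.one_def]
  | (ℓ+1), e, g, hg => by
      rw [Fin.prod_univ_succ]
      have ht := bcg_prod_mem 𝒜 R₀ ℓ (e ∘ Fin.succ) (g ∘ Fin.succ) (fun i => hg i.succ)
      have h := my_mul_mem_closure_mul (hg 0) ht
      refine AddSubgroup.closure_mono ?_ h
      rintro x hx
      rw [Set.mem_mul] at hx
      obtain ⟨u, ⟨s, hs, a, rfl⟩, v, ⟨σ, hσ, b, rfl⟩, rfl⟩ := hx
      refine ⟨Fin.cons s σ, ?_, a * b, ?_⟩
      · intro i
        refine Fin.cases ?_ (fun j => ?_) i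
        · simpa using hs
        · simpa using hσ j
      · rw [Fin.prod_univ_succ]
        simp [Algebra.TensorProduct.tmul_mul_tmul]

/-- Let `S` be a ring graded by a finitely generated abelian group `D`,
`R₀` an `S_0`-algebra, and `R = S ⊗_{S_0} R₀` with the induced `D`-grading.  Let `S_+`
(resp. `R_+`) be the ideal generated by the relevant elements.  Then
`rad(R_+) = rad((S_+)R)`, where `(S_+)R` is the extension of `S_+` along `S → R`. -/
theorem stmt_10 {D S : Type*} [AddCommGroup D] [AddGroup.FG D] [DecidableEq D]
    [CommRing S] (𝒜 : D → AddSubgroup S) [GradedRing 𝒜]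
    (R₀ : Type*) [CommRing R₀] [Algebra (SetLike.GradeZero.subring 𝒜) R₀] :
    (Ideal.span {r : S ⊗[SetLike.GradeZero.subring 𝒜] R₀ |
        Relevant (baseChangeGrading 𝒜 R₀) r}).radical =
      (Ideal.map (Algebra.TensorProduct.includeLeftRingHom :
          S →+* S ⊗[SetLike.GradeZero.subring 𝒜] R₀)
        (Ideal.span {f : S | Relevant 𝒜 f})).radical := by
  set φ : S →+* S ⊗[SetLike.GradeZero.subring 𝒜] R₀ :=
    Algebra.TensorProduct.includeLeftRingHom with hφ
  apply le_antisymm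
  · -- rad R₊ ≤ rad (S₊ R)
    have key : Ideal.span {r : S ⊗[SetLike.GradeZero.subring 𝒜] R₀ |
        Relevant (baseChangeGrading 𝒜 R₀) r} ≤
        (Ideal.map φ (Ideal.span {f : S | Relevant 𝒜 f})).radical := by
      rw [Ideal.span_le]
      rintro r ⟨⟨d, hrd⟩, n, hn, ℓ, g, e, hg, hpow, hfin⟩
      refine ⟨n, ?_⟩
      rw [hpow]
      have h := bcg_prod_mem 𝒜 R₀ ℓ e g hg
      have hle : AddSubgroup.closure
          {x | ∃ σ : Fin ℓ → S, (∀ i, σ i ∈ 𝒜 (e i)) ∧ ∃ a : R₀, x = (∏ i, σ i) ⊗ₜ a} ≤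
          (Ideal.map φ (Ideal.span {f : S | Relevant 𝒜 f})).toAddSubgroup := by
        rw [AddSubgroup.closure_le]
        rintro x ⟨σ, hσ, a, rfl⟩
        have hrel : Relevant 𝒜 (∏ i, σ i) :=
          ⟨⟨∑ i, e i, SetLike.prod_mem_graded 𝒜 e σ (fun i _ => hσ i)⟩,
            1, le_refl 1, ℓ, σ, e, hσ, pow_one _, hfin⟩
        have hmem : φ (∏ i, σ i) ∈ Ideal.map φ (Ideal.span {f : S | Relevant 𝒜 f}) :=
          Ideal.mem_map_of_mem φ (Ideal.subset_span hrel)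
        have heq : (∏ i, σ i) ⊗ₜ[SetLike.GradeZero.subring 𝒜] a =
            φ (∏ i, σ i) * (1 ⊗ₜ a) := by
          rw [hφ, Algebra.TensorProduct.includeLeftRingHom_apply,
            Algebra.TensorProduct.tmul_mul_tmul, mul_one, one_mul]
        show _ ∈ Ideal.map φ (Ideal.span {f : S | Relevant 𝒜 f})
        rw [heq]
        exact Ideal.mul_mem_right _ _ hmem
      exact hle h
    calc (Ideal.span _).radical
        ≤ ((Ideal.map φ (Ideal.span {f : S | Relevant 𝒜 f})).radical).radical :=
          Ideal.radical_mono key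
      _ = _ := Ideal.radical_idem _
  · -- rad (S₊ R) ≤ rad R₊
    apply Ideal.radical_mono
    rw [Ideal.map_span, Ideal.span_le]
    rintro x ⟨f, ⟨⟨d, hd⟩, n, hn, ℓ, g, e, hg, hpow, hfin⟩, rfl⟩
    refine Ideal.subset_span ⟨⟨d, ?_⟩, n, hn, ℓ, fun i => φ (g i), e, ?_, ?_, hfin⟩
    · exact AddSubgroup.subset_closure ⟨f, hd, 1, rfl⟩
    · intro i
      exact AddSubgroup.subset_closure ⟨g i, hg i, 1, rfl⟩
    · rw [← map_pow, hpow, map_prod]
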